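/- arXiv:1611.10234 — 6 statements merged into one kernel-verified Lean document; each statement's English description precedes it below -/
import Mathlib

section
/- Let p(z) = 1 + Σ_{n≥1} aₙ zⁿ be holomorphic on the unit disk with Re p(z) > 0 for all z ∈ 𝔻. Then |a₂ − a₁²/2| ≤ 2 − |a₁|²/2. -/
/-!
The Cayley transform `q = (p - 1) / (p + 1)` maps the unit disc into itself with `q 0 = 0`,
`q'(0) = a₁ / 2` and `q''(0) = a₂ - a₁² / 2`. By the Schwarz lemma `φ(z) = q(z) / z` maps the disc
into the closed disc, and the Schwarz–Pick inequality `|φ'(0)| ≤ 1 - |φ(0)|²` (Schwarz applied to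
`φ` followed by the disc automorphism sending `φ(0)` to `0`) reads `|q''(0) / 2| ≤ 1 - |q'(0)|²`.
-/

open Complex Metric Set

open scoped ComplexConjugate

theorem Complex.sq_norm_one_sub_conj_mul_sub_sq_norm_sub (b w : ℂ) :
    ‖1 - conj b * w‖ ^ 2 - ‖w - b‖ ^ 2 = (1 - ‖b‖ ^ 2) * (1 - ‖w‖ ^ 2) := by
  simp only [Complex.sq_norm, normSq_apply, sub_re, sub_im, mul_re, mul_im, one_re, one_im,
    conj_re, conj_im]
  ring

theorem Complex.one_sub_conj_mul_ne_zero {b w : ℂ} (hb : ‖b‖ < 1) (hw : ‖w‖ ≤ 1) :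
    1 - conj b * w ≠ 0 := by
  rw [sub_ne_zero]
  intro h
  have : ‖conj b * w‖ < 1 := by
    rw [norm_mul, RCLike.norm_conj]
    nlinarith [norm_nonneg b, norm_nonneg w]
  simp [← h] at this

theorem Complex.norm_sub_div_one_sub_conj_mul_le_one {b w : ℂ} (hb : ‖b‖ < 1) (hw : ‖w‖ ≤ 1) :
    ‖(w - b) / (1 - conj b * w)‖ ≤ 1 := by
  have hden := norm_pos_iff.2 (one_sub_conj_mul_ne_zero hb hw)
  rw [norm_div, div_le_one hden, ← sq_le_sq₀ (norm_nonneg _) hden.le, ← sub_nonneg,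
    sq_norm_one_sub_conj_mul_sub_sq_norm_sub]
  apply mul_nonneg <;> nlinarith [norm_nonneg b, norm_nonneg w]

theorem HasDerivAt.mobius_comp {φ : ℂ → ℂ} {φ' z : ℂ} (h : HasDerivAt φ φ' z) (hb : ‖φ z‖ < 1) :
    HasDerivAt (fun w ↦ (φ w - φ z) / (1 - conj (φ z) * φ w)) (φ' / (1 - ‖φ z‖ ^ 2)) z := by
  have hne := one_sub_conj_mul_ne_zero hb hb.le
  refine ((h.sub_const (φ z)).div ((h.const_mul (conj (φ z))).const_sub 1) hne).congr_deriv ?_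
  rw [sub_self, zero_mul, sub_zero, sq, mul_div_mul_right _ _ hne, conj_mul']

theorem Complex.deriv_eq_zero_of_isMaxOn_norm {φ : ℂ → ℂ} {U : Set ℂ} {c : ℂ} (hU : IsOpen U)
    (hc : c ∈ U) (hd : DifferentiableOn ℂ φ U) (hmax : IsMaxOn (norm ∘ φ) U c) : deriv φ c = 0 := by
  have hU' : U ∈ nhds c := hU.mem_nhds hc
  have hconst := Complex.eventually_eq_of_isLocalMax_norm
    (Filter.eventually_of_mem hU' fun z hz ↦ hd.differentiableAt (hU.mem_nhds hz))
    (hmax.isLocalMax hU')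
  rw [Filter.EventuallyEq.deriv_eq (f := fun _ ↦ φ c) hconst, deriv_const]

theorem AnalyticAt.deriv_dslope_same {f : ℂ → ℂ} {c : ℂ} (hf : AnalyticAt ℂ f c) :
    deriv (dslope f c) c = iteratedDeriv 2 f c / 2 := by
  rw [hf.hasFPowerSeriesAt.has_fpower_series_dslope_fslope.deriv]
  refine FormalMultilinearSeries.coeff_fslope.trans ?_
  rw [FormalMultilinearSeries.coeff_ofScalars]
  norm_num [Nat.factorial]

theorem Complex.norm_deriv_le_one_sub_sq_norm_of_mapsTo_closedBall {φ : ℂ → ℂ}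
    (hd : DifferentiableOn ℂ φ (ball 0 1)) (hφ : MapsTo φ (ball 0 1) (closedBall 0 1)) :
    ‖deriv φ 0‖ ≤ 1 - ‖φ 0‖ ^ 2 := by
  have h0 : (0 : ℂ) ∈ ball 0 1 := mem_ball_self one_pos
  have hb : ‖φ 0‖ ≤ 1 := mem_closedBall_zero_iff.1 (hφ h0)
  rcases hb.lt_or_eq with hb | hb
  · set ψ := fun w ↦ (φ w - φ 0) / (1 - conj (φ 0) * φ w)
    have hψ : HasDerivAt ψ (deriv φ 0 / (1 - ‖φ 0‖ ^ 2)) 0 :=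
      (hd.differentiableAt (isOpen_ball.mem_nhds h0)).hasDerivAt.mobius_comp hb
    have hψd : DifferentiableOn ℂ ψ (ball 0 1) := fun z hz ↦
      ((hd z hz).sub_const _).div ((differentiableWithinAt_const _).sub
        ((differentiableWithinAt_const _).mul (hd z hz)))
        (one_sub_conj_mul_ne_zero hb (mem_closedBall_zero_iff.1 (hφ hz)))
    have hψmaps : MapsTo ψ (ball 0 1) (closedBall (ψ 0) 1) := fun z hz ↦ by
      simpa [ψ] using norm_sub_div_one_sub_conj_mul_le_one hb (mem_closedBall_zero_iff.1 (hφ hz))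
    have hpos : (0 : ℝ) < 1 - ‖φ 0‖ ^ 2 := by nlinarith [norm_nonneg (φ 0)]
    have := norm_deriv_le_div_of_mapsTo_ball hψd hψmaps one_pos
    rw [hψ.deriv, div_one, norm_div, ← ofReal_one, ← ofReal_pow, ← ofReal_sub, norm_real,
      Real.norm_of_nonneg hpos.le, div_le_one hpos] at this
    exact this
  · have hmax : IsMaxOn (norm ∘ φ) (ball 0 1) 0 := fun z hz ↦
      (mem_closedBall_zero_iff.1 (hφ hz)).trans hb.symm.le
    rw [deriv_eq_zero_of_isMaxOn_norm isOpen_ball h0 hd hmax, hb]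
    norm_num

theorem Complex.norm_iteratedDeriv_two_le_of_mapsTo_ball {q : ℂ → ℂ}
    (hd : DifferentiableOn ℂ q (ball 0 1)) (hq : MapsTo q (ball 0 1) (ball 0 1)) (h0 : q 0 = 0) :
    ‖iteratedDeriv 2 q 0 / 2‖ ≤ 1 - ‖deriv q 0‖ ^ 2 := by
  have hopen : ball (0 : ℂ) 1 ∈ nhds 0 := isOpen_ball.mem_nhds (mem_ball_self one_pos)
  have hφ : MapsTo (dslope q 0) (ball 0 1) (closedBall 0 1) := fun z hz ↦ by
    simpa using norm_dslope_le_div_of_mapsTo_ball hd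
      (by rw [h0]; exact hq.mono_right ball_subset_closedBall) hz
  have := norm_deriv_le_one_sub_sq_norm_of_mapsTo_closedBall
    ((differentiableOn_dslope hopen).2 hd) hφ
  rwa [(hd.analyticAt hopen).deriv_dslope_same, dslope_same] at this

theorem Complex.norm_sub_one_lt_norm_add_one {w : ℂ} (hw : 0 < w.re) : ‖w - 1‖ < ‖w + 1‖ := by
  rw [← sq_lt_sq₀ (norm_nonneg _) (norm_nonneg _), Complex.sq_norm, Complex.sq_norm]
  simp only [normSq_apply, sub_re, sub_im, add_re, add_im, one_re, one_im]
  nlinarith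

theorem HasDerivAt.cayley_comp {p : ℂ → ℂ} {p' z : ℂ} (h : HasDerivAt p p' z) (hz : p z + 1 ≠ 0) :
    HasDerivAt (fun w ↦ (p w - 1) / (p w + 1)) (2 * p' / (p z + 1) ^ 2) z :=
  ((h.sub_const 1).div (h.add_const 1) hz).congr_deriv (by ring)

theorem iteratedDeriv_two_cayley_comp {p : ℂ → ℂ} {U : Set ℂ} (hU : IsOpen U)
    (hp : DifferentiableOn ℂ p U) (hne : ∀ z ∈ U, p z + 1 ≠ 0) {z : ℂ} (hz : z ∈ U) :
    iteratedDeriv 2 (fun w ↦ (p w - 1) / (p w + 1)) z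
      = 2 * iteratedDeriv 2 p z / (p z + 1) ^ 2 - 4 * deriv p z ^ 2 / (p z + 1) ^ 3 := by
  have hp' : ∀ w ∈ U, HasDerivAt p (deriv p w) w := fun w hw ↦
    (hp.differentiableAt (hU.mem_nhds hw)).hasDerivAt
  have hderiv : deriv (fun w ↦ (p w - 1) / (p w + 1)) =ᶠ[nhds z]
      fun w ↦ 2 * deriv p w / (p w + 1) ^ 2 :=
    Filter.eventually_of_mem (hU.mem_nhds hz) fun w hw ↦ ((hp' w hw).cayley_comp (hne w hw)).deriv
  have hp'' : HasDerivAt (deriv p) (iteratedDeriv 2 p z) z := by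
    rw [iteratedDeriv_succ, iteratedDeriv_one]
    exact ((hp.deriv hU).differentiableAt (hU.mem_nhds hz)).hasDerivAt
  have hden := ((hp' z hz).add_const 1).fun_pow 2
  rw [iteratedDeriv_succ, iteratedDeriv_one, hderiv.deriv_eq,
    ((hp''.const_mul 2).fun_div hden (pow_ne_zero 2 (hne z hz))).deriv]
  have := hne z hz
  field_simp
  ring

theorem stmt3 (p : ℂ → ℂ)
    (hp : DifferentiableOn ℂ p (ball (0:ℂ) 1))
    (h0 : p 0 = 1)
    (hre : ∀ z ∈ ball (0:ℂ) 1, 0 < (p z).re)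
    (a : ℕ → ℂ) (ha : ∀ n, a n = iteratedDeriv n p 0 / n.factorial) :
    ‖a 2 - a 1 ^ 2 / 2‖ ≤ 2 - ‖a 1‖ ^ 2 / 2 := by
  have hlt : ∀ z ∈ ball (0:ℂ) 1, ‖p z - 1‖ < ‖p z + 1‖ := fun z hz ↦
    norm_sub_one_lt_norm_add_one (hre z hz)
  have hne : ∀ z ∈ ball (0:ℂ) 1, p z + 1 ≠ 0 := fun z hz ↦
    norm_pos_iff.1 ((norm_nonneg _).trans_lt (hlt z hz))
  set q := fun z ↦ (p z - 1) / (p z + 1)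
  have hqd : DifferentiableOn ℂ q (ball 0 1) := (hp.sub_const 1).div (hp.add_const 1) hne
  have hqmaps : MapsTo q (ball 0 1) (ball 0 1) := fun z hz ↦ by
    rw [mem_ball_zero_iff, norm_div, div_lt_one ((norm_nonneg _).trans_lt (hlt z hz))]
    exact hlt z hz
  have h0mem : (0 : ℂ) ∈ ball 0 1 := mem_ball_self one_pos
  have ha1 : a 1 = deriv p 0 := by simp [ha 1]
  have ha2 : a 2 = iteratedDeriv 2 p 0 / 2 := by simp [ha 2, Nat.factorial]
  have hq1 : deriv q 0 = a 1 / 2 := by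
    rw [((hp.differentiableAt (isOpen_ball.mem_nhds h0mem)).hasDerivAt.cayley_comp
      (hne 0 h0mem)).deriv, h0, ha1]
    ring
  have hq2 : iteratedDeriv 2 q 0 = a 2 - a 1 ^ 2 / 2 := by
    rw [iteratedDeriv_two_cayley_comp isOpen_ball hp hne h0mem, h0, ha1, ha2]
    ring
  have key := norm_iteratedDeriv_two_le_of_mapsTo_ball hqd hqmaps (by simp [q, h0])
  rw [hq1, hq2, norm_div, norm_div, RCLike.norm_ofNat] at key
  linarith
end

section
/- Let f be a starlike function on the unit disk (holomorphic, f(0)=0, f'(0)=1, nonvanishing off 0, Re(z f'(z)/f(z)) > 0 off 0). Then for all z ∈ 𝔻: |z|/(1+|z|)² ≤ |f(z)| ≤ |z|/(1−|z|)². -/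
/-!
Write `f z = z * F z` with `F 0 = 1`. Then `p = z f' / f = 1 + z F' / F` is holomorphic on the
disk with `p 0 = 1` and positive real part, so the Schwarz lemma applied to `(p - 1) / (p + 1)`
gives Harnack's bounds `(1 - r) / (1 + r) ≤ Re p ≤ (1 + r) / (1 - r)` on `‖z‖ = r`. Along a ray
`t ↦ t e`, the derivative of `log ‖F (t e)‖` is `(Re p (t e) - 1) / t`, which therefore lies
between `-2 / (1 + t)` and `2 / (1 - t)`; integrating from `0` to `r` gives
`(1 + r)⁻² ≤ ‖F z‖ ≤ (1 - r)⁻²`.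
-/

open Complex Metric Set

namespace Complex

theorem re_one_add_div_one_sub (h : ℂ) :
    ((1 + h) / (1 - h)).re = (1 - ‖h‖ ^ 2) / ‖1 - h‖ ^ 2 := by
  rw [div_re, ← add_div, Complex.sq_norm, Complex.sq_norm, normSq_apply h]
  congr 1
  simp only [add_re, one_re, sub_re, add_im, one_im, sub_im]
  ring

theorem re_one_add_div_one_sub_bounds {h : ℂ} {t : ℝ} (ht : ‖h‖ ≤ t) (ht1 : t < 1) :
    (1 - t) / (1 + t) ≤ ((1 + h) / (1 - h)).re ∧ ((1 + h) / (1 - h)).re ≤ (1 + t) / (1 - t) := by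
  have hh : ‖h‖ < 1 := ht.trans_lt ht1
  have hsub : 1 - ‖h‖ ≤ ‖1 - h‖ := by simpa using norm_sub_norm_le (1 : ℂ) h
  have hsub' : ‖1 - h‖ ≤ 1 + ‖h‖ := by simpa using norm_sub_le (1 : ℂ) h
  have hadd : ‖1 + h‖ ≤ 1 + ‖h‖ := by simpa using norm_add_le (1 : ℂ) h
  have hpos : 0 < ‖1 - h‖ := by linarith
  constructor
  · calc (1 - t) / (1 + t) ≤ (1 - ‖h‖) / (1 + ‖h‖) := by
          rw [div_le_div_iff₀ (by linarith) (by positivity)]; nlinarith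
      _ = (1 - ‖h‖ ^ 2) / (1 + ‖h‖) ^ 2 := by field_simp; ring
      _ ≤ (1 - ‖h‖ ^ 2) / ‖1 - h‖ ^ 2 := by gcongr; nlinarith [norm_nonneg h]
      _ = ((1 + h) / (1 - h)).re := (re_one_add_div_one_sub h).symm
  · calc ((1 + h) / (1 - h)).re ≤ ‖1 + h‖ / ‖1 - h‖ := norm_div (1 + h) (1 - h) ▸ re_le_norm _
      _ ≤ (1 + t) / (1 - t) := by gcongr <;> linarith

theorem norm_sub_one_lt_norm_add_one_s8 {a : ℂ} (ha : 0 < a.re) : ‖a - 1‖ < ‖a + 1‖ := by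
  rw [← sq_lt_sq₀ (norm_nonneg _) (norm_nonneg _), Complex.sq_norm, Complex.sq_norm,
    normSq_apply, normSq_apply]
  simp only [sub_re, one_re, sub_im, one_im, add_re, add_im]
  nlinarith

theorem harnack_re_bounds {p : ℂ → ℂ} (hp : DifferentiableOn ℂ p (ball 0 1)) (hp0 : p 0 = 1)
    (hre : ∀ w ∈ ball (0 : ℂ) 1, 0 < (p w).re) {w : ℂ} (hw : w ∈ ball (0 : ℂ) 1) :
    (1 - ‖w‖) / (1 + ‖w‖) ≤ (p w).re ∧ (p w).re ≤ (1 + ‖w‖) / (1 - ‖w‖) := by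
  have hlt : ∀ w ∈ ball (0 : ℂ) 1, ‖p w - 1‖ < ‖p w + 1‖ := fun w hw ↦
    norm_sub_one_lt_norm_add_one_s8 (hre w hw)
  have hne : ∀ w ∈ ball (0 : ℂ) 1, p w + 1 ≠ 0 := fun w hw ↦
    norm_pos_iff.1 ((norm_nonneg _).trans_lt (hlt w hw))
  set q : ℂ → ℂ := fun w ↦ (p w - 1) / (p w + 1)
  have hq : DifferentiableOn ℂ q (ball 0 1) := (hp.sub_const 1).div (hp.add_const 1) hne
  have hmaps : MapsTo q (ball 0 1) (closedBall 0 1) := fun w hw ↦ by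
    rw [mem_closedBall_zero_iff, norm_div]
    exact div_le_one_of_le₀ (hlt w hw).le (norm_nonneg _)
  have hschwarz : ‖q w‖ ≤ ‖w‖ :=
    norm_le_norm_of_mapsTo_ball hq hmaps (by simp [q, hp0]) (mem_ball_zero_iff.1 hw)
  have hpq : p w = (1 + q w) / (1 - q w) := by
    have hq1 : 1 - q w ≠ 0 := by
      rw [sub_ne_zero]
      rintro h
      rw [← h, norm_one] at hschwarz
      exact (mem_ball_zero_iff.1 hw).not_ge hschwarz
    rw [eq_div_iff hq1]
    have hpw := hne w hw
    simp only [q]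
    field_simp
    ring
  rw [hpq]
  exact re_one_add_div_one_sub_bounds hschwarz (mem_ball_zero_iff.1 hw)

end Complex

theorem HasDerivAt.log_norm {γ : ℝ → ℂ} {γ' : ℂ} {t : ℝ} (hγ : HasDerivAt γ γ' t)
    (h0 : γ t ≠ 0) : HasDerivAt (fun s ↦ Real.log ‖γ s‖) (γ' / γ t).re t := by
  have hsq := hγ.norm_sq.log (by positivity)
  have hfun : (fun s ↦ Real.log ‖γ s‖) = fun s ↦ Real.log (‖γ s‖ ^ 2) / 2 := by
    funext s
    rw [Real.log_pow]
    push_cast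
    ring
  rw [hfun]
  refine (hsq.div_const 2).congr_deriv ?_
  rw [Complex.inner, Complex.sq_norm, div_re, mul_re, conj_re, conj_im]
  field_simp
  ring

theorem sub_le_sub_of_hasDerivAt_le {u U u' U' : ℝ → ℝ} {a b : ℝ} (hab : a ≤ b)
    (hu : ∀ t ∈ Icc a b, HasDerivAt u (u' t) t) (hU : ∀ t ∈ Icc a b, HasDerivAt U (U' t) t)
    (hle : ∀ t ∈ Ioo a b, u' t ≤ U' t) : u b - u a ≤ U b - U a := by
  have hcont : ContinuousOn (U - u) (Icc a b) := fun t ht ↦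
    ((hU t ht).sub (hu t ht)).continuousAt.continuousWithinAt
  have hmono : MonotoneOn (U - u) (Icc a b) := by
    refine monotoneOn_of_hasDerivWithinAt_nonneg (f' := U' - u') (convex_Icc a b) hcont ?_ ?_ <;>
      rw [interior_Icc]
    · exact fun t ht ↦ ((hU t (Ioo_subset_Icc_self ht)).sub
        (hu t (Ioo_subset_Icc_self ht))).hasDerivWithinAt
    · exact fun t ht ↦ sub_nonneg.2 (hle t ht)
  have := hmono (left_mem_Icc.2 hab) (right_mem_Icc.2 hab) hab
  simp only [Pi.sub_apply] at this
  linarith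

theorem hasDerivAt_log_norm_comp_ray {F : ℂ → ℂ} {e : ℂ} {t : ℝ}
    (hF : DifferentiableAt ℂ F (t * e)) (h0 : F (t * e) ≠ 0) :
    HasDerivAt (fun s : ℝ ↦ Real.log ‖F (s * e)‖) (e * logDeriv F (t * e)).re t := by
  have hray : HasDerivAt (fun w ↦ F (w * e)) (deriv F (t * e) * e) (t : ℂ) :=
    hF.hasDerivAt.comp (t : ℂ) (hasDerivAt_mul_const e)
  convert hray.comp_ofReal.log_norm h0 using 2
  rw [logDeriv_apply]
  ring

theorem log_bounds_of_deriv_bounds {v v' : ℝ → ℝ} {r : ℝ} (hr : 0 ≤ r) (hr1 : r < 1)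
    (hv : ∀ s ∈ Icc 0 r, HasDerivAt v (v' s) s)
    (hv' : ∀ s ∈ Ioo 0 r, -2 / (1 + s) ≤ v' s ∧ v' s ≤ 2 / (1 - s)) :
    v 0 - 2 * Real.log (1 + r) ≤ v r ∧ v r ≤ v 0 - 2 * Real.log (1 - r) := by
  have hlow : ∀ s ∈ Icc 0 r, HasDerivAt (fun s ↦ -2 * Real.log (1 + s)) (-2 / (1 + s)) s :=
    fun s hs ↦ ((((hasDerivAt_id' s).const_add 1).log
      (by linarith [hs.1] : (0 : ℝ) < 1 + s).ne').const_mul (-2)).congr_deriv (by ring)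
  have hupp : ∀ s ∈ Icc 0 r, HasDerivAt (fun s ↦ -2 * Real.log (1 - s)) (2 / (1 - s)) s :=
    fun s hs ↦ ((((hasDerivAt_id' s).const_sub 1).log
      (by linarith [hs.2] : (0 : ℝ) < 1 - s).ne').const_mul (-2)).congr_deriv (by ring)
  have h₁ := sub_le_sub_of_hasDerivAt_le hr hlow hv fun s hs ↦ (hv' s hs).1
  have h₂ := sub_le_sub_of_hasDerivAt_le hr hv hupp fun s hs ↦ (hv' s hs).2
  simp only [add_zero, sub_zero, Real.log_one, mul_zero] at h₁ h₂
  constructor <;> linarith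

theorem log_norm_bounds_of_harnack {F : ℂ → ℂ} (hF : DifferentiableOn ℂ F (ball 0 1))
    (hF0 : F 0 = 1) (hFne : ∀ w ∈ ball (0 : ℂ) 1, F w ≠ 0)
    (hp : ∀ w ∈ ball (0 : ℂ) 1, (1 - ‖w‖) / (1 + ‖w‖) ≤ (1 + w * logDeriv F w).re ∧
      (1 + w * logDeriv F w).re ≤ (1 + ‖w‖) / (1 - ‖w‖))
    {z : ℂ} (hz : z ∈ ball (0 : ℂ) 1) :
    -2 * Real.log (1 + ‖z‖) ≤ Real.log ‖F z‖ ∧ Real.log ‖F z‖ ≤ -2 * Real.log (1 - ‖z‖) := by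
  rcases eq_or_ne z 0 with rfl | hz0
  · simp [hF0]
  set r := ‖z‖
  have hr0 : 0 < r := norm_pos_iff.2 hz0
  have hr1 : r < 1 := mem_ball_zero_iff.1 hz
  set e : ℂ := z / r
  have hnorm : ∀ s ∈ Icc 0 r, ‖(s : ℂ) * e‖ = s := fun s hs ↦ by
    simp [e, r, hz0, abs_of_nonneg hs.1]
  have hmem : ∀ s ∈ Icc 0 r, (s : ℂ) * e ∈ ball (0 : ℂ) 1 := fun s hs ↦ by
    rw [mem_ball_zero_iff, hnorm s hs]
    exact hs.2.trans_lt hr1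
  have hv : ∀ s ∈ Icc 0 r, HasDerivAt (fun s : ℝ ↦ Real.log ‖F (s * e)‖)
      (e * logDeriv F (s * e)).re s := fun s hs ↦
    hasDerivAt_log_norm_comp_ray (hF.differentiableAt (isOpen_ball.mem_nhds (hmem s hs)))
      (hFne _ (hmem s hs))
  have hv' : ∀ s ∈ Ioo 0 r, -2 / (1 + s) ≤ (e * logDeriv F (s * e)).re ∧
      (e * logDeriv F (s * e)).re ≤ 2 / (1 - s) := fun s hs ↦ by
    have h := hp _ (hmem s (Ioo_subset_Icc_self hs))
    rw [mul_assoc, add_re, one_re, re_ofReal_mul, hnorm s (Ioo_subset_Icc_self hs)] at h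
    have hs0 := hs.1
    have hs1 : s < 1 := hs.2.trans hr1
    rw [div_le_iff₀ (by linarith), le_div_iff₀ (by linarith)] at h
    rw [div_le_iff₀ (by linarith), le_div_iff₀ (by linarith)]
    constructor <;> nlinarith [h.1, h.2]
  have hz : ((r : ℝ) : ℂ) * e = z := mul_div_cancel₀ _ (ofReal_ne_zero.2 hr0.ne')
  simpa [hF0, hz] using log_bounds_of_deriv_bounds hr0.le hr1 hv hv'

theorem norm_bounds_of_harnack {F : ℂ → ℂ} (hF : DifferentiableOn ℂ F (ball 0 1))
    (hF0 : F 0 = 1) (hFne : ∀ w ∈ ball (0 : ℂ) 1, F w ≠ 0)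
    (hp : ∀ w ∈ ball (0 : ℂ) 1, (1 - ‖w‖) / (1 + ‖w‖) ≤ (1 + w * logDeriv F w).re ∧
      (1 + w * logDeriv F w).re ≤ (1 + ‖w‖) / (1 - ‖w‖))
    {z : ℂ} (hz : z ∈ ball (0 : ℂ) 1) :
    ((1 + ‖z‖) ^ 2)⁻¹ ≤ ‖F z‖ ∧ ‖F z‖ ≤ ((1 - ‖z‖) ^ 2)⁻¹ := by
  obtain ⟨hlow, hupp⟩ := log_norm_bounds_of_harnack hF hF0 hFne hp hz
  have hr1 : ‖z‖ < 1 := mem_ball_zero_iff.1 hz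
  have hFz : 0 < ‖F z‖ := norm_pos_iff.2 (hFne z hz)
  have hlog : ∀ x : ℝ, -2 * Real.log x = Real.log ((x ^ 2)⁻¹) := fun x ↦ by
    rw [Real.log_inv, Real.log_pow]
    push_cast
    ring
  rw [hlog] at hlow hupp
  exact ⟨(Real.log_le_log_iff (by positivity) hFz).1 hlow,
    (Real.log_le_log_iff hFz (inv_pos.2 (pow_pos (by linarith) 2))).1 hupp⟩

theorem mul_logDeriv_id_mul {𝕜 : Type*} [NontriviallyNormedField 𝕜] {F : 𝕜 → 𝕜} {w : 𝕜}
    (hw : w ≠ 0) (hFw : F w ≠ 0) (hF : DifferentiableAt 𝕜 F w) :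
    w * logDeriv (fun x ↦ x * F x) w = 1 + w * logDeriv F w := by
  rw [logDeriv_mul (f := fun x ↦ x) w hw hFw differentiableAt_fun_id hF, logDeriv_id', mul_add,
    mul_one_div_cancel hw]

theorem stmt8 (f : ℂ → ℂ)
    (hf : DifferentiableOn ℂ f (ball (0:ℂ) 1))
    (h0 : f 0 = 0) (h1 : deriv f 0 = 1)
    (hnz : ∀ z ∈ ball (0:ℂ) 1, z ≠ 0 → f z ≠ 0)
    (hre : ∀ z ∈ ball (0:ℂ) 1, z ≠ 0 → 0 < (z * deriv f z / f z).re) :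
    ∀ z ∈ ball (0:ℂ) 1,
      ‖z‖ / (1 + ‖z‖) ^ 2 ≤ ‖f z‖ ∧ ‖f z‖ ≤ ‖z‖ / (1 - ‖z‖) ^ 2 := by
  set F := dslope f 0
  have hfF : f = fun w ↦ w * F w :=
    funext fun w ↦ by simpa [h0] using (sub_smul_dslope f 0 w).symm
  have hF : DifferentiableOn ℂ F (ball 0 1) :=
    (differentiableOn_dslope (isOpen_ball.mem_nhds (mem_ball_self one_pos))).2 hf
  have hF0 : F 0 = 1 := by simp only [F, dslope_same, h1]
  have hFne : ∀ w ∈ ball (0 : ℂ) 1, F w ≠ 0 := fun w hw ↦ by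
    rcases eq_or_ne w 0 with rfl | hw0
    · simp [hF0]
    · exact right_ne_zero_of_mul (hfF ▸ hnz w hw hw0)
  -- `p` extends `w f'(w) / f(w)` holomorphically across `0`, with `p 0 = 1`
  set p : ℂ → ℂ := fun w ↦ 1 + w * logDeriv F w
  have hp : DifferentiableOn ℂ p (ball 0 1) :=
    (differentiableOn_id.mul (((hF.analyticOnNhd isOpen_ball).deriv.differentiableOn).div hF
      hFne)).const_add 1
  have hp_re : ∀ w ∈ ball (0 : ℂ) 1, 0 < (p w).re := fun w hw ↦ by
    rcases eq_or_ne w 0 with rfl | hw0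
    · simp [p]
    · have := hre w hw hw0
      rwa [mul_div_assoc, ← logDeriv_apply, hfF,
        mul_logDeriv_id_mul hw0 (hFne w hw) (hF.differentiableAt (isOpen_ball.mem_nhds hw))] at this
  intro z hz
  obtain ⟨hlow, hupp⟩ := norm_bounds_of_harnack hF hF0 hFne
    (fun w hw ↦ harnack_re_bounds hp (by simp [p]) hp_re hw) hz
  rw [hfF, norm_mul, div_eq_mul_inv, div_eq_mul_inv]
  exact ⟨mul_le_mul_of_nonneg_left hlow (norm_nonneg z),
    mul_le_mul_of_nonneg_left hupp (norm_nonneg z)⟩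
end

section
/- Let f be a starlike function on the unit disk (holomorphic, f(0)=0, f'(0)=1, nonvanishing off 0, Re(z f'(z)/f(z)) > 0 off 0). Then for all z ∈ 𝔻: (1−|z|)/(1+|z|)³ ≤ |f'(z)| ≤ (1+|z|)/(1−|z|)³. -/
/-!
Write `g = dslope f 0`, so that `f z = z g z`, and `p = f' / g`, which equals `z f' / f` off the
origin. Then `p` has positive real part and `p 0 = 1`, so the Schwarz lemma applied to
`(p - 1) / (p + 1)` gives the Carathéodory bounds `(1 - r) / (1 + r) ≤ Re p ≤ ‖p‖ ≤ (1 + r) / (1 - r)`.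
Since `1 + z g' / g = p`, the derivative of `t ↦ log ‖g (t z)‖` is `Re (z g' / g)` at `t z`;
comparing it with the derivatives of `-2 log (1 ∓ t ‖z‖)` gives
`1 / (1 + r) ^ 2 ≤ ‖g z‖ ≤ 1 / (1 - r) ^ 2`, and `f' = p g` yields the theorem.
-/

open Complex Metric Set

theorem sub_le_sub_of_hasDerivAt_le_s9 {φ ψ φ' ψ' : ℝ → ℝ} {a b : ℝ} (hab : a ≤ b)
    (hφ : ContinuousOn φ (Icc a b)) (hψ : ContinuousOn ψ (Icc a b))
    (hφ' : ∀ t ∈ Ioo a b, HasDerivAt φ (φ' t) t) (hψ' : ∀ t ∈ Ioo a b, HasDerivAt ψ (ψ' t) t)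
    (hle : ∀ t ∈ Ioo a b, φ' t ≤ ψ' t) : φ b - φ a ≤ ψ b - ψ a := by
  have hmono : MonotoneOn (ψ - φ) (Icc a b) := by
    refine monotoneOn_of_hasDerivWithinAt_nonneg (f' := ψ' - φ') (convex_Icc a b) (hψ.sub hφ)
        (fun t ht => ?_) (fun t ht => ?_)
    · rw [interior_Icc] at ht
      exact ((hψ' t ht).sub (hφ' t ht)).hasDerivWithinAt
    · rw [interior_Icc] at ht
      exact sub_nonneg.2 (hle t ht)
  have := hmono (left_mem_Icc.2 hab) (right_mem_Icc.2 hab) hab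
  simp only [Pi.sub_apply] at this
  linarith

theorem hasDerivAt_log_norm {G : ℝ → ℂ} {G' : ℂ} {t : ℝ} (hG : HasDerivAt G G' t)
    (h0 : G t ≠ 0) : HasDerivAt (fun s => Real.log ‖G s‖) (G' / G t).re t := by
  have hsq : ‖G t‖ ^ 2 ≠ 0 := by positivity
  have := (hG.norm_sq.log hsq).div_const 2
  have hfun : (fun s => Real.log ‖G s‖) = fun s => Real.log (‖G s‖ ^ 2) / 2 := by
    funext s
    rw [Real.log_pow]
    push_cast
    ring
  rw [hfun]
  refine this.congr_deriv ?_
  rw [Complex.inner, Complex.div_re, Complex.sq_norm]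
  simp only [mul_re, conj_re, conj_im, normSq_apply]
  field_simp
  ring

theorem hasDerivAt_log_norm_comp_ofReal_mul {g : ℂ → ℂ} {z : ℂ} {t : ℝ}
    (hg : DifferentiableAt ℂ g (t * z)) (h0 : g (t * z) ≠ 0) :
    HasDerivAt (fun s : ℝ => Real.log ‖g (s * z)‖) (z * logDeriv g (t * z)).re t := by
  have hray : HasDerivAt (fun w : ℂ => g (w * z)) (deriv g (t * z) * z) t :=
    hg.hasDerivAt.comp_of_eq (t : ℂ) (hasDerivAt_mul_const z) (by simp)
  convert hasDerivAt_log_norm hray.comp_ofReal h0 using 2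
  rw [logDeriv_apply]
  ring

section Growth

variable {g : ℂ → ℂ} {z : ℂ}

theorem ofReal_mul_mem_ball {R t : ℝ} (ht : t ∈ Icc (0 : ℝ) 1) (hz : z ∈ ball (0 : ℂ) R) :
    (t : ℂ) * z ∈ ball (0 : ℂ) R := by
  simpa [Complex.real_smul] using
    (convex_ball (0 : ℂ) R).smul_mem_of_zero_mem (mem_ball_self (pos_of_mem_ball hz)) hz ht

theorem hasDerivAt_log_norm_ray (hg : DifferentiableOn ℂ g (ball 0 1))
    (hgnz : ∀ w ∈ ball (0 : ℂ) 1, g w ≠ 0) (hz : z ∈ ball (0 : ℂ) 1) {t : ℝ}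
    (ht : t ∈ Icc (0 : ℝ) 1) :
    HasDerivAt (fun s : ℝ => Real.log ‖g (s * z)‖) (z * logDeriv g (t * z)).re t := by
  have hmem := ofReal_mul_mem_ball ht hz
  exact hasDerivAt_log_norm_comp_ofReal_mul
    (hg.differentiableAt (isOpen_ball.mem_nhds hmem)) (hgnz _ hmem)

theorem re_mul_logDeriv_ray {t : ℝ} (ht : 0 < t) :
    (z * logDeriv g (t * z)).re = ((t * z) * logDeriv g (t * z)).re / t := by
  rw [mul_assoc, re_ofReal_mul]
  field_simp

theorem norm_ofReal_mul {t : ℝ} (ht : 0 ≤ t) : ‖(t : ℂ) * z‖ = t * ‖z‖ := by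
  rw [norm_mul, norm_real, Real.norm_of_nonneg ht]

theorem norm_le_of_re_one_add_mul_logDeriv_le (hg : DifferentiableOn ℂ g (ball 0 1))
    (hg0 : g 0 = 1) (hgnz : ∀ w ∈ ball (0 : ℂ) 1, g w ≠ 0)
    (hre : ∀ w ∈ ball (0 : ℂ) 1, (1 + w * logDeriv g w).re ≤ (1 + ‖w‖) / (1 - ‖w‖))
    (hz : z ∈ ball (0 : ℂ) 1) : ‖g z‖ ≤ 1 / (1 - ‖z‖) ^ 2 := by
  have hr : 0 < 1 - ‖z‖ := sub_pos.2 (mem_ball_zero_iff.1 hz)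
  have hφ := fun t ht => hasDerivAt_log_norm_ray hg hgnz hz (t := t) ht
  have hψ : ∀ t ∈ Icc (0 : ℝ) 1, HasDerivAt (fun s => -2 * Real.log (1 - s * ‖z‖))
      (2 * ‖z‖ / (1 - t * ‖z‖)) t := by
    intro t ht
    have hpos : 0 < 1 - t * ‖z‖ := by nlinarith [ht.2, norm_nonneg z]
    refine ((((hasDerivAt_mul_const ‖z‖).const_sub 1).log hpos.ne').const_mul (-2)).congr_deriv ?_
    field_simp
  have hbound : ∀ t ∈ Ioo (0 : ℝ) 1, (z * logDeriv g (t * z)).re ≤ 2 * ‖z‖ / (1 - t * ‖z‖) := by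
    intro t ht
    have hw := hre _ (ofReal_mul_mem_ball (Ioo_subset_Icc_self ht) hz)
    have hpos : 0 < 1 - t * ‖z‖ := by nlinarith [ht.2, norm_nonneg z]
    rw [add_re, one_re, norm_ofReal_mul ht.1.le, le_div_iff₀ hpos] at hw
    rw [re_mul_logDeriv_ray ht.1, div_le_div_iff₀ ht.1 hpos]
    linarith
  have hcmp := sub_le_sub_of_hasDerivAt_le_s9 zero_le_one
    (fun t ht => (hφ t ht).continuousAt.continuousWithinAt)
    (fun t ht => (hψ t ht).continuousAt.continuousWithinAt)
    (fun t ht => hφ t (Ioo_subset_Icc_self ht)) (fun t ht => hψ t (Ioo_subset_Icc_self ht)) hbound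
  simp only [ofReal_one, one_mul, ofReal_zero, zero_mul, hg0, norm_one, Real.log_one,
    mul_zero, sub_zero] at hcmp
  rw [← Real.log_le_log_iff (norm_pos_iff.2 (hgnz z hz)) (by positivity),
    one_div, Real.log_inv, Real.log_pow]
  push_cast
  linarith

theorem le_norm_of_le_re_one_add_mul_logDeriv (hg : DifferentiableOn ℂ g (ball 0 1))
    (hg0 : g 0 = 1) (hgnz : ∀ w ∈ ball (0 : ℂ) 1, g w ≠ 0)
    (hre : ∀ w ∈ ball (0 : ℂ) 1, (1 - ‖w‖) / (1 + ‖w‖) ≤ (1 + w * logDeriv g w).re)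
    (hz : z ∈ ball (0 : ℂ) 1) : 1 / (1 + ‖z‖) ^ 2 ≤ ‖g z‖ := by
  have hφ := fun t ht => hasDerivAt_log_norm_ray hg hgnz hz (t := t) ht
  have hψ : ∀ t ∈ Icc (0 : ℝ) 1, HasDerivAt (fun s => -2 * Real.log (1 + s * ‖z‖))
      (-(2 * ‖z‖ / (1 + t * ‖z‖))) t := by
    intro t ht
    have hpos : 0 < 1 + t * ‖z‖ := by nlinarith [ht.1, norm_nonneg z]
    refine ((((hasDerivAt_mul_const ‖z‖).const_add 1).log hpos.ne').const_mul (-2)).congr_deriv ?_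
    field_simp
  have hbound : ∀ t ∈ Ioo (0 : ℝ) 1,
      -(2 * ‖z‖ / (1 + t * ‖z‖)) ≤ (z * logDeriv g (t * z)).re := by
    intro t ht
    have hw := hre _ (ofReal_mul_mem_ball (Ioo_subset_Icc_self ht) hz)
    have hpos : 0 < 1 + t * ‖z‖ := by nlinarith [ht.1, norm_nonneg z]
    rw [add_re, one_re, norm_ofReal_mul ht.1.le, div_le_iff₀ hpos] at hw
    rw [re_mul_logDeriv_ray ht.1, neg_le, ← neg_div, div_le_div_iff₀ ht.1 hpos]
    linarith
  have hcmp := sub_le_sub_of_hasDerivAt_le_s9 zero_le_one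
    (fun t ht => (hψ t ht).continuousAt.continuousWithinAt)
    (fun t ht => (hφ t ht).continuousAt.continuousWithinAt)
    (fun t ht => hψ t (Ioo_subset_Icc_self ht)) (fun t ht => hφ t (Ioo_subset_Icc_self ht)) hbound
  simp only [ofReal_one, one_mul, ofReal_zero, zero_mul, hg0, norm_one, Real.log_one,
    mul_zero, add_zero, sub_zero] at hcmp
  rw [← Real.log_le_log_iff (by positivity) (norm_pos_iff.2 (hgnz z hz)),
    one_div, Real.log_inv, Real.log_pow]
  push_cast
  linarith

end Growth

section Caratheodory

theorem add_one_ne_zero_of_re_pos {w : ℂ} (hw : 0 < w.re) : w + 1 ≠ 0 := fun h => by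
  have := congrArg re h
  simp only [add_re, one_re, zero_re] at this
  linarith

theorem norm_sub_one_div_add_one_lt_one {w : ℂ} (hw : 0 < w.re) : ‖(w - 1) / (w + 1)‖ < 1 := by
  rw [norm_div, div_lt_one (norm_pos_iff.2 (add_one_ne_zero_of_re_pos hw)),
    ← sq_lt_sq₀ (norm_nonneg _) (norm_nonneg _), Complex.sq_norm, Complex.sq_norm, normSq_apply, normSq_apply]
  simp only [sub_re, add_re, sub_im, add_im, one_re, one_im]
  nlinarith

variable {a : ℂ} {t : ℝ}

theorem one_sub_le_norm_one_sub (ha : ‖a‖ ≤ t) : 1 - t ≤ ‖1 - a‖ := by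
  have := norm_sub_norm_le (1 : ℂ) a
  rw [norm_one] at this
  linarith

theorem norm_one_add_div_one_sub_le (ha : ‖a‖ ≤ t) (ht : t < 1) :
    ‖(1 + a) / (1 - a)‖ ≤ (1 + t) / (1 - t) := by
  have ht0 : 0 ≤ t := (norm_nonneg a).trans ha
  rw [norm_div]
  exact div_le_div₀ (by linarith) ((norm_add_le _ _).trans (by simpa using ha)) (by linarith)
    (one_sub_le_norm_one_sub ha)

theorem div_le_re_one_add_div_one_sub (ha : ‖a‖ ≤ t) (ht : t < 1) :
    (1 - t) / (1 + t) ≤ ((1 + a) / (1 - a)).re := by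
  have ht0 : 0 ≤ t := (norm_nonneg a).trans ha
  have hsub : ‖1 - a‖ ≤ 1 + t := (norm_sub_le _ _).trans (by simpa using ha)
  have hpos : 0 < ‖1 - a‖ := lt_of_lt_of_le (by linarith) (one_sub_le_norm_one_sub ha)
  have hre : ((1 + a) / (1 - a)).re = (1 - ‖a‖ ^ 2) / ‖1 - a‖ ^ 2 := by
    rw [div_re, Complex.sq_norm, Complex.sq_norm, normSq_apply, normSq_apply]
    simp only [add_re, sub_re, add_im, sub_im, one_re, one_im]
    ring
  rw [hre, show (1 - t) / (1 + t) = (1 - t ^ 2) / (1 + t) ^ 2 by field_simp; ring]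
  exact div_le_div₀ (by nlinarith [norm_nonneg a]) (by nlinarith [norm_nonneg a]) (by positivity)
    (by nlinarith)

theorem caratheodory_bounds {p : ℂ → ℂ} (hp : DifferentiableOn ℂ p (ball 0 1)) (hp0 : p 0 = 1)
    (hre : ∀ w ∈ ball (0 : ℂ) 1, 0 < (p w).re) {z : ℂ} (hz : z ∈ ball (0 : ℂ) 1) :
    (1 - ‖z‖) / (1 + ‖z‖) ≤ (p z).re ∧ ‖p z‖ ≤ (1 + ‖z‖) / (1 - ‖z‖) := by
  have hne : ∀ w ∈ ball (0 : ℂ) 1, p w + 1 ≠ 0 := fun w hw => add_one_ne_zero_of_re_pos (hre w hw)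
  set q : ℂ → ℂ := fun w => (p w - 1) / (p w + 1) with hq
  have hq_le : ‖q z‖ ≤ ‖z‖ :=
    norm_le_norm_of_mapsTo_ball ((hp.sub_const 1).div (hp.add_const 1) hne)
      (fun w hw => mem_closedBall_zero_iff.2 (norm_sub_one_div_add_one_lt_one (hre w hw)).le)
      (by simp [hq, hp0]) (mem_ball_zero_iff.1 hz)
  have hpq : p z = (1 + q z) / (1 - q z) := by
    have := hne z hz
    simp only [hq]
    field_simp
    ring
  rw [hpq]
  exact ⟨div_le_re_one_add_div_one_sub hq_le (mem_ball_zero_iff.1 hz),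
    norm_one_add_div_one_sub_le hq_le (mem_ball_zero_iff.1 hz)⟩

end Caratheodory

section Dslope

variable {𝕜 : Type*} [NontriviallyNormedField 𝕜] {f : 𝕜 → 𝕜}

theorem mul_dslope_zero (h0 : f 0 = 0) (z : 𝕜) : z * dslope f 0 z = f z := by
  simpa [h0] using sub_smul_dslope f 0 z

theorem deriv_eq_dslope_add_mul_deriv (h0 : f 0 = 0) {z : 𝕜}
    (hg : DifferentiableAt 𝕜 (dslope f 0) z) :
    deriv f z = dslope f 0 z + z * deriv (dslope f 0) z := by
  have hprod := (hasDerivAt_id z).mul hg.hasDerivAt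
  rw [(hprod.congr_of_eventuallyEq
    (Filter.Eventually.of_forall fun w => (mul_dslope_zero h0 w).symm)).deriv]
  simp

theorem mul_logDeriv_dslope (h0 : f 0 = 0) {z : 𝕜} (hg : DifferentiableAt 𝕜 (dslope f 0) z)
    (hgz : dslope f 0 z ≠ 0) :
    1 + z * logDeriv (dslope f 0) z = deriv f z / dslope f 0 z := by
  rw [logDeriv_apply, deriv_eq_dslope_add_mul_deriv h0 hg]
  field_simp

theorem dslope_zero_ne_zero {s : Set 𝕜} (h0 : f 0 = 0) (h1 : deriv f 0 = 1)
    (hnz : ∀ z ∈ s, z ≠ 0 → f z ≠ 0) {z : 𝕜} (hz : z ∈ s) : dslope f 0 z ≠ 0 := by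
  rcases eq_or_ne z 0 with rfl | hz0
  · simp [h1]
  · intro hg
    exact hnz z hz hz0 (by rw [← mul_dslope_zero h0, hg, mul_zero])

end Dslope

theorem re_deriv_div_dslope_pos {f : ℂ → ℂ} {s : Set ℂ} (h0 : f 0 = 0) (h1 : deriv f 0 = 1)
    (hre : ∀ z ∈ s, z ≠ 0 → 0 < (z * deriv f z / f z).re) {z : ℂ} (hz : z ∈ s) :
    0 < (deriv f z / dslope f 0 z).re := by
  rcases eq_or_ne z 0 with rfl | hz0
  · simp [h1]
  · simpa [← mul_dslope_zero h0 z, mul_div_mul_left _ _ hz0] using hre z hz hz0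

theorem starlike_caratheodory_bounds {f : ℂ → ℂ} (hf : DifferentiableOn ℂ f (ball 0 1))
    (h0 : f 0 = 0) (h1 : deriv f 0 = 1) (hnz : ∀ z ∈ ball (0 : ℂ) 1, z ≠ 0 → f z ≠ 0)
    (hre : ∀ z ∈ ball (0 : ℂ) 1, z ≠ 0 → 0 < (z * deriv f z / f z).re)
    {z : ℂ} (hz : z ∈ ball (0 : ℂ) 1) :
    (1 - ‖z‖) / (1 + ‖z‖) ≤ (deriv f z / dslope f 0 z).re ∧
      ‖deriv f z / dslope f 0 z‖ ≤ (1 + ‖z‖) / (1 - ‖z‖) := by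
  have hg : DifferentiableOn ℂ (dslope f 0) (ball 0 1) :=
    (differentiableOn_dslope (ball_mem_nhds _ one_pos)).2 hf
  refine caratheodory_bounds (p := fun w => deriv f w / dslope f 0 w) ?_ (by simp [h1])
    (fun w hw => re_deriv_div_dslope_pos h0 h1 hre hw) hz
  exact (hf.analyticOnNhd isOpen_ball).deriv.differentiableOn.div hg
    (fun w hw => dslope_zero_ne_zero h0 h1 hnz hw)

theorem starlike_dslope_bounds {f : ℂ → ℂ} (hf : DifferentiableOn ℂ f (ball 0 1))
    (h0 : f 0 = 0) (h1 : deriv f 0 = 1) (hnz : ∀ z ∈ ball (0 : ℂ) 1, z ≠ 0 → f z ≠ 0)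
    (hre : ∀ z ∈ ball (0 : ℂ) 1, z ≠ 0 → 0 < (z * deriv f z / f z).re)
    {z : ℂ} (hz : z ∈ ball (0 : ℂ) 1) :
    1 / (1 + ‖z‖) ^ 2 ≤ ‖dslope f 0 z‖ ∧ ‖dslope f 0 z‖ ≤ 1 / (1 - ‖z‖) ^ 2 := by
  have hg : DifferentiableOn ℂ (dslope f 0) (ball 0 1) :=
    (differentiableOn_dslope (ball_mem_nhds _ one_pos)).2 hf
  have hg0 : dslope f 0 0 = 1 := by rw [dslope_same, h1]
  have hgnz : ∀ w ∈ ball (0 : ℂ) 1, dslope f 0 w ≠ 0 := fun w hw =>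
    dslope_zero_ne_zero h0 h1 hnz hw
  have hp : ∀ w ∈ ball (0 : ℂ) 1, 1 + w * logDeriv (dslope f 0) w = deriv f w / dslope f 0 w :=
    fun w hw => mul_logDeriv_dslope h0 (hg.differentiableAt (isOpen_ball.mem_nhds hw)) (hgnz w hw)
  have hcar := fun w hw => starlike_caratheodory_bounds hf h0 h1 hnz hre (z := w) hw
  exact ⟨le_norm_of_le_re_one_add_mul_logDeriv hg hg0 hgnz
      (fun w hw => hp w hw ▸ (hcar w hw).1) hz,
    norm_le_of_re_one_add_mul_logDeriv_le hg hg0 hgnz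
      (fun w hw => hp w hw ▸ (re_le_norm _).trans (hcar w hw).2) hz⟩

theorem stmt9 (f : ℂ → ℂ)
    (hf : DifferentiableOn ℂ f (ball (0:ℂ) 1))
    (h0 : f 0 = 0) (h1 : deriv f 0 = 1)
    (hnz : ∀ z ∈ ball (0:ℂ) 1, z ≠ 0 → f z ≠ 0)
    (hre : ∀ z ∈ ball (0:ℂ) 1, z ≠ 0 → 0 < (z * deriv f z / f z).re) :
    ∀ z ∈ ball (0:ℂ) 1,
      (1 - ‖z‖) / (1 + ‖z‖) ^ 3 ≤ ‖deriv f z‖ ∧ ‖deriv f z‖ ≤ (1 + ‖z‖) / (1 - ‖z‖) ^ 3 := by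
  intro z hz
  obtain ⟨hp_re, hp_norm⟩ := starlike_caratheodory_bounds hf h0 h1 hnz hre hz
  obtain ⟨hg_lower, hg_upper⟩ := starlike_dslope_bounds hf h0 h1 hnz hre hz
  have hfactor : ‖deriv f z‖ = ‖deriv f z / dslope f 0 z‖ * ‖dslope f 0 z‖ := by
    rw [norm_div, div_mul_cancel₀ _ (norm_ne_zero_iff.2 (dslope_zero_ne_zero h0 h1 hnz hz))]
  have hr : ‖z‖ < 1 := mem_ball_zero_iff.1 hz
  rw [hfactor]
  constructor
  · calc (1 - ‖z‖) / (1 + ‖z‖) ^ 3 = (1 - ‖z‖) / (1 + ‖z‖) * (1 / (1 + ‖z‖) ^ 2) := by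
          rw [div_mul_div_comm, mul_one, ← pow_succ']
      _ ≤ _ := mul_le_mul (hp_re.trans (re_le_norm _)) hg_lower (by positivity) (norm_nonneg _)
  · calc _ ≤ (1 + ‖z‖) / (1 - ‖z‖) * (1 / (1 - ‖z‖) ^ 2) :=
          mul_le_mul hp_norm hg_upper (norm_nonneg _) (div_nonneg (by positivity) (by linarith))
      _ = (1 + ‖z‖) / (1 - ‖z‖) ^ 3 := by rw [div_mul_div_comm, mul_one, ← pow_succ']
end

section
/- Let f be a starlike function on the unit disk (holomorphic, f(0)=0, f'(0)=1, nonvanishing off 0, Re(z f'(z)/f(z)) > 0 off 0). Then for all z ∈ 𝔻 \ {0}: (1−|z|)/(1+|z|) ≤ |z f'(z)/f(z)| ≤ (1+|z|)/(1−|z|). -/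
/-!
Off the origin `z f'(z) / f(z) = f'(z) / (f(z) / z)`, and `f(z) / z` extends holomorphically to
the disk with value `f'(0) = 1` at `0`. So the quotient extends to a holomorphic `p` with `p 0 = 1`
and positive real part. The Cayley transform `ω = (p - 1) / (p + 1)` maps the disk into itself
with `ω 0 = 0`, so `‖ω z‖ ≤ ‖z‖` by the Schwarz lemma, and the bounds follow from
`p = (1 + ω) / (1 - ω)` and `1 - ‖z‖ ≤ ‖1 ± ω z‖ ≤ 1 + ‖z‖`.
-/

open Complex Metric Set

namespace Complex

lemma norm_sub_one_lt_norm_add_one_s10 {w : ℂ} (hw : 0 < w.re) : ‖w - 1‖ < ‖w + 1‖ := by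
  have hsq : ‖w - 1‖ ^ 2 < ‖w + 1‖ ^ 2 := by
    simp only [Complex.sq_norm, normSq_apply, sub_re, sub_im, add_re, add_im, one_re, one_im]
    nlinarith
  exact (pow_lt_pow_iff_left₀ (norm_nonneg _) (norm_nonneg _) two_ne_zero).mp hsq

lemma add_one_ne_zero_of_re_pos {w : ℂ} (hw : 0 < w.re) : w + 1 ≠ 0 :=
  norm_pos_iff.mp <| (norm_nonneg _).trans_lt (norm_sub_one_lt_norm_add_one_s10 hw)

lemma one_add_div_one_sub_cayley {w : ℂ} (hw : w + 1 ≠ 0) :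
    (1 + (w - 1) / (w + 1)) / (1 - (w - 1) / (w + 1)) = w := by
  field_simp
  ring

lemma norm_one_add_mem_Icc {u : ℂ} {r : ℝ} (hu : ‖u‖ ≤ r) :
    1 - r ≤ ‖1 + u‖ ∧ ‖1 + u‖ ≤ 1 + r := by
  constructor
  · have := norm_sub_norm_le (1 : ℂ) (-u)
    rw [norm_one, norm_neg, sub_neg_eq_add] at this
    linarith
  · calc ‖1 + u‖ ≤ ‖(1 : ℂ)‖ + ‖u‖ := norm_add_le _ _
      _ ≤ 1 + r := by rw [norm_one]; linarith

lemma norm_one_add_div_one_sub_mem_Icc {w : ℂ} {r : ℝ} (hw : ‖w‖ ≤ r) (hr : r < 1) :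
    (1 - r) / (1 + r) ≤ ‖(1 + w) / (1 - w)‖ ∧ ‖(1 + w) / (1 - w)‖ ≤ (1 + r) / (1 - r) := by
  obtain ⟨hnum_ge, hnum_le⟩ := norm_one_add_mem_Icc hw
  obtain ⟨hden_ge, hden_le⟩ := norm_one_add_mem_Icc (u := -w) (r := r) (by rwa [norm_neg])
  rw [← sub_eq_add_neg] at hden_ge hden_le
  have hr0 : 0 < 1 - r := by linarith
  rw [norm_div]
  constructor <;> gcongr <;> linarith

/-- Carathéodory's bounds for a function of positive real part on the unit disk. -/
theorem norm_mem_Icc_of_re_pos {p : ℂ → ℂ} (hp : DifferentiableOn ℂ p (ball 0 1)) (hp0 : p 0 = 1)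
    (hre : ∀ z ∈ ball (0 : ℂ) 1, 0 < (p z).re) {z : ℂ} (hz : z ∈ ball (0 : ℂ) 1) :
    (1 - ‖z‖) / (1 + ‖z‖) ≤ ‖p z‖ ∧ ‖p z‖ ≤ (1 + ‖z‖) / (1 - ‖z‖) := by
  set ω : ℂ → ℂ := fun z ↦ (p z - 1) / (p z + 1)
  have hp_ne : ∀ z ∈ ball (0 : ℂ) 1, p z + 1 ≠ 0 := fun z hz ↦ add_one_ne_zero_of_re_pos (hre z hz)
  have hω : DifferentiableOn ℂ ω (ball 0 1) := (hp.sub_const 1).div (hp.add_const 1) hp_ne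
  have hω_maps : MapsTo ω (ball 0 1) (closedBall 0 1) := fun z hz ↦ by
    rw [mem_closedBall_zero_iff, norm_div,
      div_le_one ((norm_nonneg _).trans_lt (norm_sub_one_lt_norm_add_one_s10 (hre z hz)))]
    exact (norm_sub_one_lt_norm_add_one_s10 (hre z hz)).le
  have hω0 : ω 0 = 0 := by simp [ω, hp0]
  have hz1 : ‖z‖ < 1 := mem_ball_zero_iff.mp hz
  have hschwarz : ‖ω z‖ ≤ ‖z‖ := norm_le_norm_of_mapsTo_ball hω hω_maps hω0 hz1
  rw [← one_add_div_one_sub_cayley (hp_ne z hz)]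
  exact norm_one_add_div_one_sub_mem_Icc hschwarz hz1

end Complex

lemma dslope_zero_eq_div {f : ℂ → ℂ} (h0 : f 0 = 0) {z : ℂ} (hz : z ≠ 0) :
    dslope f 0 z = f z / z := by
  rw [dslope_of_ne f hz, slope_def_field, h0, sub_zero, sub_zero]

lemma deriv_div_dslope_zero {f : ℂ → ℂ} (h0 : f 0 = 0) {z : ℂ} (hz : z ≠ 0) :
    deriv f z / dslope f 0 z = z * deriv f z / f z := by
  rw [dslope_zero_eq_div h0 hz, div_div_eq_mul_div, mul_comm]

theorem stmt10 (f : ℂ → ℂ)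
    (hf : DifferentiableOn ℂ f (ball (0:ℂ) 1))
    (h0 : f 0 = 0) (h1 : deriv f 0 = 1)
    (hnz : ∀ z ∈ ball (0:ℂ) 1, z ≠ 0 → f z ≠ 0)
    (hre : ∀ z ∈ ball (0:ℂ) 1, z ≠ 0 → 0 < (z * deriv f z / f z).re) :
    ∀ z ∈ ball (0:ℂ) 1, z ≠ 0 →
      (1 - ‖z‖) / (1 + ‖z‖) ≤ ‖z * deriv f z / f z‖ ∧
      ‖z * deriv f z / f z‖ ≤ (1 + ‖z‖) / (1 - ‖z‖) := by
  have hslope_ne : ∀ z ∈ ball (0 : ℂ) 1, dslope f 0 z ≠ 0 := fun z hz ↦ by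
    rcases eq_or_ne z 0 with rfl | hz0
    · simp [h1]
    · rw [dslope_zero_eq_div h0 hz0]; exact div_ne_zero (hnz z hz hz0) hz0
  set p : ℂ → ℂ := fun z ↦ deriv f z / dslope f 0 z
  have hp : DifferentiableOn ℂ p (ball 0 1) :=
    (hf.analyticOnNhd isOpen_ball).deriv.differentiableOn.div
      ((Complex.differentiableOn_dslope (ball_mem_nhds 0 one_pos)).mpr hf) hslope_ne
  have hp0 : p 0 = 1 := by simp [p, h1]
  have hp_re : ∀ z ∈ ball (0 : ℂ) 1, 0 < (p z).re := fun z hz ↦ by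
    rcases eq_or_ne z 0 with rfl | hz0
    · simp [hp0]
    · simpa only [p, deriv_div_dslope_zero h0 hz0] using hre z hz hz0
  intro z hz hz0
  rw [← deriv_div_dslope_zero h0 hz0]
  exact Complex.norm_mem_Icc_of_re_pos hp hp0 hp_re hz
end

section
/- Let f(z) = z + Σ_{n≥2} aₙ zⁿ be holomorphic on the unit disk and suppose g(z) = z f'(z) is starlike (g nonvanishing off 0 and Re(z g'(z)/g(z)) > 0 off 0). Then |aₙ| ≤ 1 for all n ≥ 2. -/
/-!
Write the starlike function `g = z f'` as `g = z h` and put `p = g' / h`, so that `p = z g' / g`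
away from `0`, `p 0 = 1`, `re p ≥ 0` on the disc and `z g' = p g`. By Carathéodory's lemma the
Taylor coefficients `c k` (`k ≥ 1`) of `p` have norm at most `2 re p 0 = 2`. Comparing coefficients
in `z g' = p g` gives `n b n = ∑ c k b (n - k)` for the coefficients `b n = n a n` of `g`, and
strong induction yields `‖b n‖ ≤ n`, i.e. `‖a n‖ ≤ 1`.
-/

open Complex ComplexConjugate Metric Set Finset Filter Topology Real

section TaylorCoeff

variable {𝕜 : Type*} [NontriviallyNormedField 𝕜]

noncomputable def taylorCoeff (f : 𝕜 → 𝕜) (n : ℕ) : 𝕜 :=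
  iteratedDeriv n f 0 / n.factorial

theorem taylorCoeff_one (f : 𝕜 → 𝕜) : taylorCoeff f 1 = deriv f 0 := by
  simp [taylorCoeff]

variable [CharZero 𝕜]

theorem taylorCoeff_mul {u v : 𝕜 → 𝕜} {n : ℕ} (hu : ContDiffAt 𝕜 n u 0)
    (hv : ContDiffAt 𝕜 n v 0) :
    taylorCoeff (fun z ↦ u z * v z) n =
      ∑ k ∈ range (n + 1), taylorCoeff u k * taylorCoeff v (n - k) := by
  rw [taylorCoeff, iteratedDeriv_fun_mul hu hv, sum_div]
  refine sum_congr rfl fun k hk ↦ ?_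
  rw [Nat.cast_choose 𝕜 (Nat.lt_succ_iff.mp (mem_range.mp hk)), taylorCoeff, taylorCoeff]
  have := Nat.cast_ne_zero (R := 𝕜) |>.mpr n.factorial_ne_zero
  field_simp

theorem taylorCoeff_id_mul_deriv {u : 𝕜 → 𝕜} {n : ℕ} (hu : ContDiffAt 𝕜 (n + 1) u 0) :
    taylorCoeff (fun z ↦ z * deriv u z) n = n * taylorCoeff u n := by
  have hu' : ContDiffAt 𝕜 n (deriv u) 0 := hu.derivWithin le_rfl
  have key : iteratedDeriv n (fun z ↦ z * deriv u z) 0 = n * iteratedDeriv n u 0 := by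
    rw [iteratedDeriv_fun_mul (f := fun z ↦ z) contDiffAt_id hu', sum_eq_single 1]
    · cases n with
      | zero => simp
      | succ n => simp [iteratedDeriv_fun_id_zero, iteratedDeriv_succ']
    · intro k _ hk
      simp [iteratedDeriv_fun_id_zero, hk]
    · intro h1_notMem
      simp [Nat.choose_eq_zero_of_lt (by simpa using h1_notMem : n < 1)]
  rw [taylorCoeff, taylorCoeff, key, mul_div_assoc]

theorem natCast_mul_taylorCoeff_eq_sum [CompleteSpace 𝕜] {p g : 𝕜 → 𝕜} (hp : AnalyticAt 𝕜 p 0)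
    (hg : AnalyticAt 𝕜 g 0) (hpg : (fun z ↦ z * deriv g z) =ᶠ[𝓝 0] fun z ↦ p z * g z) (n : ℕ) :
    n * taylorCoeff g n = ∑ k ∈ range (n + 1), taylorCoeff p k * taylorCoeff g (n - k) := by
  rw [← taylorCoeff_id_mul_deriv hg.contDiffAt, ← taylorCoeff_mul hp.contDiffAt hg.contDiffAt,
    taylorCoeff, taylorCoeff, hpg.iteratedDeriv_eq]

end TaylorCoeff

theorem norm_le_of_natCast_mul_eq_sum {𝕜 : Type*} [RCLike 𝕜] {b c : ℕ → 𝕜} (hc0 : c 0 = 1)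
    (hc : ∀ k ≠ 0, ‖c k‖ ≤ 2) (hb1 : ‖b 1‖ ≤ 1)
    (hrec : ∀ n, n * b n = ∑ k ∈ range (n + 1), c k * b (n - k)) (n : ℕ) : ‖b n‖ ≤ n := by
  induction n using Nat.strong_induction_on with
  | _ N ih =>
  rcases lt_or_ge N 2 with hN | hN
  · interval_cases N
    · simpa [hc0, eq_comm] using hrec 0
    · simpa using hb1
  have hsplit : ((N - 1 : ℕ) : 𝕜) * b N = ∑ k ∈ range N, c (k + 1) * b (N - (k + 1)) := by
    have := hrec N
    rw [sum_range_succ', hc0, one_mul, Nat.sub_zero] at this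
    push_cast [Nat.cast_sub (by omega : 1 ≤ N)]
    linear_combination this
  have hgauss : 2 * ∑ j ∈ range N, j = (N - 1) * N := by
    rw [mul_comm, sum_range_id_mul_two, mul_comm]
  have hbound : ((N - 1 : ℕ) : ℝ) * ‖b N‖ ≤ (N - 1 : ℕ) * N := by
    calc ((N - 1 : ℕ) : ℝ) * ‖b N‖ = ‖∑ k ∈ range N, c (k + 1) * b (N - (k + 1))‖ := by
          rw [← hsplit, norm_mul, RCLike.norm_natCast]
      _ ≤ ∑ k ∈ range N, ((2 * (N - 1 - k) : ℕ) : ℝ) := by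
          refine (norm_sum_le _ _).trans (sum_le_sum fun k _ ↦ ?_)
          rw [norm_mul, Nat.sub_sub, add_comm 1 k, Nat.cast_mul, Nat.cast_two]
          exact mul_le_mul (hc _ k.succ_ne_zero) (ih _ (by omega)) (norm_nonneg _) zero_le_two
      _ = (N - 1 : ℕ) * N := by
          rw [← Nat.cast_sum, sum_range_reflect (fun j ↦ 2 * j), ← mul_sum, hgauss, Nat.cast_mul]
  exact le_of_mul_le_mul_left hbound (by norm_cast; omega)

theorem norm_circleAverage_le {E : Type*} [NormedAddCommGroup E] [NormedSpace ℝ E] {f : ℂ → E}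
    {c : ℂ} {R : ℝ} : ‖circleAverage f c R‖ ≤ circleAverage (fun z ↦ ‖f z‖) c R := by
  rw [circleAverage_def, circleAverage_def, norm_smul, smul_eq_mul,
    Real.norm_of_nonneg (by positivity)]
  gcongr
  exact intervalIntegral.norm_integral_le_integral_norm two_pi_pos.le

theorem circleAverage_conj {f : ℂ → ℂ} {c : ℂ} {R : ℝ} :
    circleAverage (fun z ↦ conj (f z)) c R = conj (circleAverage f c R) := by
  simp only [circleAverage_def, intervalIntegral, integral_conj, ← map_sub]
  rw [Complex.real_smul, Complex.real_smul, map_mul, conj_ofReal]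

section Caratheodory

variable {p : ℂ → ℂ} {r : ℝ} {n : ℕ}

theorem circleAverage_inv_pow_mul_eq_taylorCoeff (hp : DifferentiableOn ℂ p (closedBall 0 r))
    (hr : 0 < r) : circleAverage (fun z ↦ z⁻¹ ^ n * p z) 0 r = taylorCoeff p n := by
  have hcauchy := hp.circleIntegral_one_div_sub_center_pow_smul hr n
  rw [circleAverage_eq_circleIntegral hr.ne', taylorCoeff]
  simp only [sub_zero, smul_eq_mul] at hcauchy ⊢
  have hintegrand : (fun z : ℂ ↦ z⁻¹ * (z⁻¹ ^ n * p z)) = fun z ↦ 1 / z ^ (n + 1) * p z := by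
    ext z
    rw [one_div, pow_succ', mul_inv, ← inv_pow, mul_assoc]
  rw [hintegrand, hcauchy]
  field_simp [two_pi_I_ne_zero]

theorem circleAverage_pow_mul_eq_zero (hp : DifferentiableOn ℂ p (closedBall 0 r))
    (hr : 0 ≤ r) (hn : n ≠ 0) : circleAverage (fun z ↦ z ^ n * p z) 0 r = 0 := by
  have hmean := (((differentiableOn_pow n).fun_mul hp).diffContOnCl_ball
    (closedBall_subset_closedBall (abs_of_nonneg hr).le)).circleAverage
  simpa [hn] using hmean

theorem circleAverage_re_eq (hp : DifferentiableOn ℂ p (closedBall 0 r)) (hr : 0 ≤ r) :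
    circleAverage (fun z ↦ (p z).re) 0 r = (p 0).re := by
  have hmean : circleAverage p 0 r = p 0 :=
    (hp.diffContOnCl_ball (closedBall_subset_closedBall (abs_of_nonneg hr).le)).circleAverage
  have hint : CircleIntegrable p 0 r :=
    ContinuousOn.circleIntegrable hr (hp.continuousOn.mono sphere_subset_closedBall)
  exact (reCLM.circleAverage_comp_comm hint).trans (by rw [hmean, reCLM_apply])

-- On the circle `conj z = r ^ 2 / z`, so adding the conjugate of the vanishing average of
-- `z ^ n * p z` replaces `p` by `2 * re p` in the Cauchy formula.
theorem taylorCoeff_eq_circleAverage_re (hp : DifferentiableOn ℂ p (closedBall 0 r))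
    (hr : 0 < r) (hn : n ≠ 0) :
    taylorCoeff p n = circleAverage (fun z ↦ z⁻¹ ^ n * (2 * (p z).re : ℂ)) 0 r := by
  have hcont : ContinuousOn p (sphere 0 r) := hp.continuousOn.mono sphere_subset_closedBall
  have hinv : ContinuousOn (fun z : ℂ ↦ z⁻¹ ^ n) (sphere 0 r) :=
    (continuousOn_inv₀.mono fun z hz ↦ ne_zero_of_mem_sphere hr.ne' ⟨z, hz⟩).pow n
  have hconj : circleAverage (fun z ↦ ((r ^ 2)⁻¹ ^ n : ℝ) • conj (z ^ n * p z)) 0 r = 0 := by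
    rw [circleAverage_fun_smul, circleAverage_conj, circleAverage_pow_mul_eq_zero hp hr.le hn,
      map_zero, smul_zero]
  have hint₁ : CircleIntegrable (fun z ↦ z⁻¹ ^ n * p z) 0 r :=
    ContinuousOn.circleIntegrable hr.le (hinv.mul hcont)
  have hint₂ : CircleIntegrable (fun z ↦ ((r ^ 2)⁻¹ ^ n : ℝ) • conj (z ^ n * p z)) 0 r :=
    ContinuousOn.circleIntegrable hr.le (by fun_prop)
  calc taylorCoeff p n
      = circleAverage (fun z ↦ z⁻¹ ^ n * p z) 0 r +
          circleAverage (fun z ↦ ((r ^ 2)⁻¹ ^ n : ℝ) • conj (z ^ n * p z)) 0 r := by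
        rw [hconj, add_zero, circleAverage_inv_pow_mul_eq_taylorCoeff hp hr]
    _ = circleAverage (fun z ↦ z⁻¹ ^ n * p z + ((r ^ 2)⁻¹ ^ n : ℝ) • conj (z ^ n * p z)) 0 r :=
        (circleAverage_fun_add hint₁ hint₂).symm
    _ = _ := circleAverage_congr_sphere fun z hz ↦ ?_
  rw [abs_of_pos hr] at hz
  have hz0 : z ≠ 0 := ne_zero_of_mem_sphere hr.ne' ⟨z, hz⟩
  have hconj_z : conj z = r ^ 2 * z⁻¹ := by
    rw [eq_mul_inv_iff_mul_eq₀ hz0, mul_comm, mul_conj', mem_sphere_zero_iff_norm.mp hz]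
  have hr0 : (r : ℂ) ≠ 0 := ofReal_ne_zero.mpr hr.ne'
  rw [Complex.real_smul, map_mul, map_pow, hconj_z, re_eq_add_conj]
  push_cast
  rw [mul_pow, ← pow_mul, inv_pow, inv_pow, ← pow_mul]
  field_simp

theorem norm_taylorCoeff_mul_pow_le (hp : DifferentiableOn ℂ p (closedBall 0 r)) (hr : 0 < r)
    (hre : ∀ z ∈ sphere (0 : ℂ) r, 0 ≤ (p z).re) (hn : n ≠ 0) :
    ‖taylorCoeff p n‖ * r ^ n ≤ 2 * (p 0).re := by
  calc ‖taylorCoeff p n‖ * r ^ n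
      ≤ circleAverage (fun z ↦ ‖z⁻¹ ^ n * (2 * (p z).re : ℂ)‖) 0 r * r ^ n := by
        rw [taylorCoeff_eq_circleAverage_re hp hr hn]
        gcongr
        exact norm_circleAverage_le
    _ = circleAverage (fun z ↦ ((r ^ n)⁻¹ * 2) • (p z).re) 0 r * r ^ n := by
        congr 1
        refine circleAverage_congr_sphere fun z hz ↦ ?_
        rw [abs_of_pos hr] at hz
        rw [norm_mul, norm_pow, norm_inv, mem_sphere_zero_iff_norm.mp hz, norm_mul,
          Complex.norm_two, norm_real, Real.norm_of_nonneg (hre z hz), inv_pow, smul_eq_mul,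
          mul_assoc]
    _ = 2 * (p 0).re := by
        rw [circleAverage_fun_smul, circleAverage_re_eq hp hr.le, smul_eq_mul]
        field_simp

theorem norm_taylorCoeff_le_of_re_nonneg (hp : DifferentiableOn ℂ p (ball 0 1))
    (hre : ∀ z ∈ ball (0 : ℂ) 1, 0 ≤ (p z).re) (hn : n ≠ 0) :
    ‖taylorCoeff p n‖ ≤ 2 * (p 0).re := by
  have hbound : ∀ r ∈ Ioo (0 : ℝ) 1, ‖taylorCoeff p n‖ * r ^ n ≤ 2 * (p 0).re := fun r hr ↦
    norm_taylorCoeff_mul_pow_le (hp.mono (closedBall_subset_ball hr.2)) hr.1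
      (fun z hz ↦ hre z (sphere_subset_ball hr.2 hz)) hn
  have hlim : Tendsto (fun r : ℝ ↦ ‖taylorCoeff p n‖ * r ^ n) (𝓝[<] 1)
      (𝓝 ‖taylorCoeff p n‖) := by
    simpa using ((continuous_pow n).const_mul ‖taylorCoeff p n‖).continuousAt.tendsto.mono_left
      (nhdsWithin_le_nhds (a := (1 : ℝ)))
  exact le_of_tendsto hlim (eventually_of_mem (Ioo_mem_nhdsLT zero_lt_one) hbound)

end Caratheodory

theorem norm_taylorCoeff_le_of_starlike {g : ℂ → ℂ} (hg : DifferentiableOn ℂ g (ball 0 1))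
    (hg0 : g 0 = 0) (hg1 : deriv g 0 = 1) (hgnz : ∀ z ∈ ball (0 : ℂ) 1, z ≠ 0 → g z ≠ 0)
    (hgre : ∀ z ∈ ball (0 : ℂ) 1, z ≠ 0 → 0 < (z * deriv g z / g z).re) (n : ℕ) :
    ‖taylorCoeff g n‖ ≤ n := by
  have hball : ball (0 : ℂ) 1 ∈ 𝓝 0 := ball_mem_nhds 0 one_pos
  set h := dslope g 0
  have hgh : ∀ z, g z = z * h z := fun z ↦ by simpa [hg0] using (sub_smul_dslope g 0 z).symm
  have hh : DifferentiableOn ℂ h (ball 0 1) := (differentiableOn_dslope hball).2 hg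
  have hh0 : h 0 = 1 := (dslope_same g 0).trans hg1
  have hhnz : ∀ z ∈ ball (0 : ℂ) 1, h z ≠ 0 := by
    intro z hz
    rcases eq_or_ne z 0 with rfl | hz0
    · simp [hh0]
    · exact right_ne_zero_of_mul (hgh z ▸ hgnz z hz hz0)
  set p := fun z ↦ deriv g z / h z
  have hp : DifferentiableOn ℂ p (ball 0 1) := (hg.deriv isOpen_ball).div hh hhnz
  have hp0 : p 0 = 1 := by simp [p, hg1, hh0]
  have hpg : ∀ z ∈ ball (0 : ℂ) 1, z * deriv g z = p z * g z := by
    intro z hz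
    simp only [p, hgh z]
    field_simp [hhnz z hz]
  have hpre : ∀ z ∈ ball (0 : ℂ) 1, 0 ≤ (p z).re := by
    intro z hz
    rcases eq_or_ne z 0 with rfl | hz0
    · simp [hp0]
    · have := hgre z hz hz0
      rw [hpg z hz, mul_div_cancel_right₀ _ (hgnz z hz hz0)] at this
      exact this.le
  refine norm_le_of_natCast_mul_eq_sum (c := taylorCoeff p) (by simp [taylorCoeff, hp0])
    (fun k hk ↦ by simpa [hp0] using norm_taylorCoeff_le_of_re_nonneg hp hpre hk)
    (by simp [taylorCoeff_one, hg1])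
    (natCast_mul_taylorCoeff_eq_sum (hp.analyticAt hball) (hg.analyticAt hball)
      (eventually_of_mem hball hpg)) n

theorem stmt13_general (f : ℂ → ℂ)
    (hf : DifferentiableOn ℂ f (ball (0:ℂ) 1))
    (h1 : deriv f 0 = 1)
    (g : ℂ → ℂ) (hg : ∀ z, g z = z * deriv f z)
    (hgnz : ∀ z ∈ ball (0:ℂ) 1, z ≠ 0 → g z ≠ 0)
    (hgre : ∀ z ∈ ball (0:ℂ) 1, z ≠ 0 → 0 < (z * deriv g z / g z).re)
    (a : ℕ → ℂ) (ha : ∀ n, a n = iteratedDeriv n f 0 / n.factorial) :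
    ∀ n : ℕ, 2 ≤ n → ‖a n‖ ≤ 1 := by
  intro n hn
  have hball : ball (0 : ℂ) 1 ∈ 𝓝 0 := ball_mem_nhds 0 one_pos
  have hg_eq : g = fun z ↦ z * deriv f z := funext hg
  have hf' : DifferentiableOn ℂ (deriv f) (ball 0 1) := hf.deriv isOpen_ball
  have hg_diff : DifferentiableOn ℂ g (ball 0 1) := hg_eq ▸ differentiableOn_id.mul hf'
  have hg1 : deriv g 0 = 1 := by
    rw [hg_eq, deriv_fun_mul differentiableAt_fun_id (hf'.differentiableAt hball), h1]
    simp
  have hcoeff : taylorCoeff g n = n * a n := by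
    rw [hg_eq, taylorCoeff_id_mul_deriv (hf.analyticAt hball).contDiffAt, ha, taylorCoeff]
  have hbound := norm_taylorCoeff_le_of_starlike hg_diff (by simp [hg]) hg1 hgnz hgre n
  rw [hcoeff, norm_mul, RCLike.norm_natCast] at hbound
  exact (mul_le_iff_le_one_right (by exact_mod_cast (by omega : 0 < n))).mp hbound

theorem stmt13 (f : ℂ → ℂ)
    (hf : DifferentiableOn ℂ f (ball (0:ℂ) 1))
    (h0 : f 0 = 0) (h1 : deriv f 0 = 1)
    (g : ℂ → ℂ) (hg : ∀ z, g z = z * deriv f z)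
    (hgnz : ∀ z ∈ ball (0:ℂ) 1, z ≠ 0 → g z ≠ 0)
    (hgre : ∀ z ∈ ball (0:ℂ) 1, z ≠ 0 → 0 < (z * deriv g z / g z).re)
    (a : ℕ → ℂ) (ha : ∀ n, a n = iteratedDeriv n f 0 / n.factorial) :
    ∀ n : ℕ, 2 ≤ n → ‖a n‖ ≤ 1 :=
  stmt13_general f hf h1 g hg hgnz hgre a ha
end

section
/- Let f be holomorphic on the unit disk with f'(0) = 1 and suppose the image f(𝔻) is a convex set. Then f(𝔻) contains the open ball of radius 1/2 centered at f(0). -/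
open Complex Metric Set
open scoped ComplexConjugate Topology

/-!
If `w ∈ ball (f 0) (1/2)` were missing from the open convex set `f '' 𝔻`, a complex-linear
functional would put `f '' 𝔻` in a half-plane `Re (u * c) < Re (w * c)`. The Cayley map of that
half-plane sends it into the unit disk and `f 0 * c` to `0`, so the Schwarz lemma bounds the
derivative: `‖c‖ = ‖(f · * c)' 0‖ ≤ 2 Re ((w - f 0) * c) ≤ 2 ‖w - f 0‖ ‖c‖ < ‖c‖`.
-/

theorem isOpen_image_of_deriv_ne_zero {f : ℂ → ℂ} {U : Set ℂ} {c : ℂ} (hU : IsOpen U)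
    (hU' : IsPreconnected U) (hc : c ∈ U) (hf : DifferentiableOn ℂ f U)
    (hf' : deriv f c ≠ 0) : IsOpen (f '' U) := by
  rcases (hf.analyticOnNhd hU).is_constant_or_isOpen hU' with ⟨v, hv⟩ | h
  · have hconst : f =ᶠ[𝓝 c] fun _ ↦ v := Filter.mem_of_superset (hU.mem_nhds hc) hv
    exact absurd (by simpa using hconst.deriv_eq) hf'
  · exact h U subset_rfl hU

theorem norm_sub_lt_norm_sub_reflection {s s₀ : ℂ} {T : ℝ} (hs : s.re < T) (hs₀ : s₀.re < T) :
    ‖s - s₀‖ < ‖s - (2 * T - conj s₀)‖ := by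
  rw [← sq_lt_sq₀ (norm_nonneg _) (norm_nonneg _), ← normSq_eq_norm_sq, ← normSq_eq_norm_sq]
  simp only [normSq_apply, sub_re, sub_im, mul_re, mul_im, conj_re, conj_im, ofReal_re,
    ofReal_im, re_ofNat, im_ofNat]
  nlinarith

theorem norm_deriv_le_of_forall_re_lt {g : ℂ → ℂ} {c : ℂ} {R T : ℝ}
    (hg : DifferentiableOn ℂ g (ball c R)) (hR : 0 < R) (hT : ∀ z ∈ ball c R, (g z).re < T) :
    ‖deriv g c‖ ≤ 2 * (T - (g c).re) / R := by
  have hc : c ∈ ball c R := mem_ball_self hR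
  set r : ℂ := 2 * T - conj (g c)
  have hnear : ∀ z ∈ ball c R, ‖g z - g c‖ < ‖g z - r‖ := fun z hz ↦
    norm_sub_lt_norm_sub_reflection (hT z hz) (hT c hc)
  have hden : ∀ z ∈ ball c R, g z - r ≠ 0 := fun z hz h ↦
    (norm_nonneg _).not_gt (by simpa [h] using hnear z hz)
  set cayley : ℂ → ℂ := fun z ↦ (g z - g c) / (g z - r)
  have hcayley : MapsTo cayley (ball c R) (closedBall (cayley c) 1) := by
    intro z hz
    rw [show cayley c = 0 by simp [cayley], mem_closedBall_zero_iff, norm_div]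
    exact div_le_one_of_le₀ (hnear z hz).le (norm_nonneg _)
  have hschwarz : ‖deriv cayley c‖ ≤ 1 / R := norm_deriv_le_div_of_mapsTo_ball
    ((hg.sub_const (g c)).div (hg.sub_const r) hden) hcayley hR
  have hgc : HasDerivAt g (deriv g c) c :=
    (hg.differentiableAt (isOpen_ball.mem_nhds hc)).hasDerivAt
  have hderiv : deriv cayley c = deriv g c / (g c - r) := by
    have := (hgc.sub_const (g c)).div (hgc.sub_const r) (hden c hc)
    rw [show deriv cayley c = _ from this.deriv]
    field_simp [hden c hc]
    ring
  have hgcr : ‖g c - r‖ = 2 * (T - (g c).re) := by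
    have hreal : g c - r = ((2 * ((g c).re - T) : ℝ) : ℂ) := by
      apply Complex.ext <;> simp [r]
      ring
    rw [hreal, norm_real, Real.norm_eq_abs, abs_of_neg (by linarith [hT c hc])]
    ring
  rw [hderiv, norm_div, hgcr, div_le_div_iff₀ (by linarith [hT c hc]) hR] at hschwarz
  rw [le_div_iff₀ hR]
  linarith

theorem stmt18 (f : ℂ → ℂ)
    (hf : DifferentiableOn ℂ f (ball (0:ℂ) 1))
    (h1 : deriv f 0 = 1)
    (hconv : Convex ℝ (f '' ball (0:ℂ) 1)) :
    ball (f 0) (1/2) ⊆ f '' ball (0:ℂ) 1 := by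
  intro w hw
  by_contra hw'
  have h0 : (0 : ℂ) ∈ ball (0 : ℂ) 1 := mem_ball_self one_pos
  have hopen : IsOpen (f '' ball (0:ℂ) 1) :=
    isOpen_image_of_deriv_ne_zero isOpen_ball (convex_ball 0 1).isPreconnected h0 hf
      (by simp [h1])
  obtain ⟨ℓ, hℓ⟩ := RCLike.geometric_hahn_banach_open_point (𝕜 := ℂ) hconv hopen hw'
  set c := ℓ 1
  have hℓc : ∀ u, ℓ u = u * c := fun u ↦ by simpa using ℓ.map_smul u 1
  have hsep : ∀ z ∈ ball (0:ℂ) 1, (f z * c).re < (w * c).re := fun z hz ↦ by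
    simpa [hℓc] using hℓ (f z) (mem_image_of_mem f hz)
  have hc : c ≠ 0 := by
    rintro hc
    simpa [hc] using hsep 0 h0
  have hbound := norm_deriv_le_of_forall_re_lt (hf.mul_const c) one_pos hsep
  rw [deriv_mul_const_field, h1, one_mul, div_one, ← sub_re, ← sub_mul] at hbound
  have hlt : ((w - f 0) * c).re < ‖c‖ / 2 := calc
    ((w - f 0) * c).re ≤ ‖w - f 0‖ * ‖c‖ := (re_le_norm _).trans (norm_mul _ _).le
    _ < 1 / 2 * ‖c‖ := by
      gcongr
      simpa [dist_eq, norm_sub_rev] using hw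
    _ = ‖c‖ / 2 := by ring
  linarith [norm_pos_iff.2 hc]
end
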